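/- Let r and s be coprime positive integers with a = r/s ∈ (0, 1/2), and let P denote the normalized arc-length measure on the unit circle S¹ (parametrized by angle θ ∈ [0, 2π)). Define Q(B) = (1/2π) ∫_B (1 + (1/2) sin(2sθ)) dθ for Borel sets B ⊆ S¹. Then Q is a Borel probability measure on S¹, Q ≠ P, and Q(C) = P(C) = a for every arc C of S¹ of arc length 2πa. -/

import Mathlib

/-!
The density `1 + sin (2sθ) / 2` integrates to `L + (cos (2sβ) - cos (2s(β + L))) / (4s)` over
the angle interval `[β, β + L]`. When `L = 2πr/s` the two cosines coincide, because
`2sL = 2r · 2π`, so `Q` and `P` give the same mass to every arc of length `2πa`; the same holds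
for `L = 2π`, so `Q` has total mass `1`. On the arc `[0, π/(2s)]`, by contrast, the cosine term
is `1/(2s) ≠ 0`, so `Q ≠ P`.
-/

open MeasureTheory Real

instance : Fact (0 < 2 * π) := ⟨by positivity⟩

/-- The closed arc of the circle `ℝ / 2πℤ` starting at angle `β` of arc length `2πa`. -/
noncomputable def arc (a β : ℝ) : Set (AddCircle (2 * π)) :=
  (fun θ : ℝ => (θ : AddCircle (2 * π))) '' Set.Icc β (β + 2 * π * a)

/-- The measure `Q` on the circle with density `1 + (1/2) sin (2sθ)` with respect to the
normalized arc-length measure, the angle `θ` being taken in `[0, 2π)`. -/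
noncomputable def Qmeas (s : ℕ) : Measure (AddCircle (2 * π)) :=
  (AddCircle.haarAddCircle : Measure (AddCircle (2 * π))).withDensity
    (AddCircle.liftIco (2 * π) 0
      (fun θ : ℝ => ENNReal.ofReal (1 + (1 / 2) * Real.sin (2 * s * θ))))

open Set
open scoped ENNReal

namespace AddCircle

variable {T : ℝ} [hT : Fact (0 < T)]

theorem liftIco_coe_apply_of_periodic {B : Type*} {g : ℝ → B} (hg : Function.Periodic g T)
    (a θ : ℝ) : liftIco T a g θ = g θ := by
  have hcoe : ((toIcoMod hT.out a θ : ℝ) : AddCircle T) = θ := by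
    rw [← self_sub_toIcoDiv_zsmul, coe_sub, QuotientAddGroup.mk_zsmul, coe_period, smul_zero,
      sub_zero]
  rw [← hcoe, liftIco_coe_apply (toIcoMod_mem_Ico hT.out a θ), ← self_sub_toIcoDiv_zsmul,
    hg.sub_zsmul_eq]

theorem measurable_liftIco {B : Type*} [MeasurableSpace B] {g : ℝ → B} (hg : Measurable g)
    (a : ℝ) : Measurable (liftIco T a g) :=
  (hg.comp measurable_subtype_coe).comp (measurableEquivIco T a).measurable

theorem haarAddCircle_eq_smul_volume :
    (haarAddCircle : Measure (AddCircle T)) = (ENNReal.ofReal T)⁻¹ • volume := by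
  rw [volume_eq_smul_haarAddCircle, smul_smul,
    ENNReal.inv_mul_cancel (ENNReal.ofReal_pos.mpr hT.out).ne' ENNReal.ofReal_ne_top, one_smul]

theorem coe_preimage_image_Icc_inter_Ico {β L : ℝ} (hL : L < T) :
    ((↑) : ℝ → AddCircle T) ⁻¹' ((↑) '' Icc β (β + L)) ∩ Ico β (β + T) = Icc β (β + L) := by
  have hsub : Icc β (β + L) ⊆ Ico β (β + T) := Icc_subset_Ico_right (by linarith)
  refine Subset.antisymm ?_ fun θ hθ => ⟨mem_image_of_mem _ hθ, hsub hθ⟩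
  rintro θ ⟨⟨φ, hφ, hφθ⟩, hθ⟩
  rwa [← (coe_eq_coe_iff_of_mem_Ico (hsub hφ) hθ).mp hφθ]

theorem setLIntegral_image_Icc {F : AddCircle T → ℝ≥0∞} (hF : Measurable F) {β L : ℝ}
    (hL : L < T) : ∫⁻ x in (↑) '' Icc β (β + L), F x = ∫⁻ θ in Ioc β (β + L), F θ := by
  have harc : MeasurableSet ((↑) '' Icc β (β + L) : Set (AddCircle T)) :=
    (isCompact_Icc.image (AddCircle.continuous_mk' T)).isClosed.measurableSet
  rw [← (AddCircle.measurePreserving_mk T β).setLIntegral_comp_preimage harc hF,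
    ← Measure.restrict_congr_set Ico_ae_eq_Ioc, Measure.restrict_restrict' measurableSet_Ico,
    coe_preimage_image_Icc_inter_Ico hL, setLIntegral_congr Ioc_ae_eq_Icc.symm]

theorem setLIntegral_haarAddCircle_image_Icc {F : AddCircle T → ℝ≥0∞} (hF : Measurable F)
    {β L : ℝ} (hL : L < T) :
    ∫⁻ x in (↑) '' Icc β (β + L), F x ∂haarAddCircle
      = (ENNReal.ofReal T)⁻¹ * ∫⁻ θ in Ioc β (β + L), F θ := by
  rw [haarAddCircle_eq_smul_volume, Measure.restrict_smul, lintegral_smul_measure,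
    setLIntegral_image_Icc hF hL, smul_eq_mul]

theorem lintegral_haarAddCircle (F : AddCircle T → ℝ≥0∞) (a : ℝ) :
    ∫⁻ x, F x ∂haarAddCircle = (ENNReal.ofReal T)⁻¹ * ∫⁻ θ in Ioc a (a + T), F θ := by
  rw [haarAddCircle_eq_smul_volume, lintegral_smul_measure, AddCircle.lintegral_preimage,
    smul_eq_mul]

theorem haarAddCircle_image_Icc {β L : ℝ} (hL : L < T) :
    (haarAddCircle : Measure (AddCircle T)) ((↑) '' Icc β (β + L)) = ENNReal.ofReal (L / T) := by
  rw [← setLIntegral_one, setLIntegral_haarAddCircle_image_Icc measurable_const hL,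
    setLIntegral_one, Real.volume_Ioc, add_sub_cancel_left, ENNReal.ofReal_div_of_pos hT.out,
    ENNReal.div_eq_inv_mul]

end AddCircle

theorem integral_one_add_half_sin_mul (s : ℕ) (hs : 0 < s) (β L : ℝ) :
    ∫ θ in β..β + L, (1 + 1 / 2 * sin (2 * s * θ))
      = L + (cos (2 * s * β) - cos (2 * s * (β + L))) / (4 * s) := by
  have hc : (2 * s : ℝ) ≠ 0 := by positivity
  rw [intervalIntegral.integral_add intervalIntegrable_const
      (by apply Continuous.intervalIntegrable; fun_prop),
    intervalIntegral.integral_const, intervalIntegral.integral_const_mul,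
    intervalIntegral.integral_comp_mul_left (fun x => sin x) hc, integral_sin]
  simp only [smul_eq_mul]
  field_simp
  ring

theorem cos_two_mul_add_eq_of_mul_eq_nat_mul_pi {s L : ℝ} {n : ℕ} (h : s * L = n * π) (β : ℝ) :
    cos (2 * s * (β + L)) = cos (2 * s * β) := by
  rw [mul_add, show 2 * s * L = n * (2 * π) by linear_combination 2 * h, cos_add_nat_mul_two_pi]

theorem periodic_ofReal_one_add_half_sin_mul (s : ℕ) :
    Function.Periodic (fun θ : ℝ => ENNReal.ofReal (1 + 1 / 2 * sin (2 * s * θ))) (2 * π) := by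
  intro θ
  simp only [mul_add, show 2 * (s : ℝ) * (2 * π) = (2 * s : ℕ) * (2 * π) by push_cast; ring,
    sin_add_nat_mul_two_pi]

theorem setLIntegral_ofReal_one_add_half_sin_mul (s : ℕ) (hs : 0 < s) (β : ℝ) {L : ℝ}
    (hL : 0 ≤ L) :
    ∫⁻ θ in Ioc β (β + L), ENNReal.ofReal (1 + 1 / 2 * sin (2 * s * θ))
      = ENNReal.ofReal (L + (cos (2 * s * β) - cos (2 * s * (β + L))) / (4 * s)) := by
  rw [← integral_one_add_half_sin_mul s hs, intervalIntegral.integral_of_le (by linarith),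
    ofReal_integral_eq_lintegral_ofReal]
  · exact (by fun_prop : Continuous fun θ : ℝ => 1 + 1 / 2 * sin (2 * s * θ)).integrableOn_Ioc
  · exact .of_forall fun θ => show 0 ≤ 1 + 1 / 2 * sin (2 * s * θ) by
      linarith [neg_one_le_sin (2 * s * θ)]

theorem Qmeas_image_Icc (s : ℕ) (hs : 0 < s) (β : ℝ) {L : ℝ} (hL0 : 0 ≤ L) (hL : L < 2 * π) :
    Qmeas s ((↑) '' Icc β (β + L))
      = ENNReal.ofReal ((L + (cos (2 * s * β) - cos (2 * s * (β + L))) / (4 * s)) / (2 * π)) := by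
  rw [Qmeas, withDensity_apply', AddCircle.setLIntegral_haarAddCircle_image_Icc
    (AddCircle.measurable_liftIco (by fun_prop) 0) hL]
  simp_rw [AddCircle.liftIco_coe_apply_of_periodic (periodic_ofReal_one_add_half_sin_mul s)]
  rw [setLIntegral_ofReal_one_add_half_sin_mul s hs β hL0, ENNReal.ofReal_div_of_pos two_pi_pos,
    ENNReal.div_eq_inv_mul]

theorem isProbabilityMeasure_Qmeas (s : ℕ) (hs : 0 < s) : IsProbabilityMeasure (Qmeas s) := by
  constructor
  rw [Qmeas, withDensity_apply _ MeasurableSet.univ, Measure.restrict_univ,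
    AddCircle.lintegral_haarAddCircle _ 0]
  simp_rw [AddCircle.liftIco_coe_apply_of_periodic (periodic_ofReal_one_add_half_sin_mul s)]
  rw [setLIntegral_ofReal_one_add_half_sin_mul s hs 0 two_pi_pos.le,
    cos_two_mul_add_eq_of_mul_eq_nat_mul_pi (n := 2 * s) (by push_cast; ring), sub_self, zero_div,
    add_zero, ENNReal.inv_mul_cancel (ENNReal.ofReal_pos.mpr two_pi_pos).ne' ENNReal.ofReal_ne_top]

theorem Qmeas_ne_haarAddCircle (s : ℕ) (hs : 0 < s) : Qmeas s ≠ AddCircle.haarAddCircle := by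
  intro h
  have hL : π / (2 * s) < 2 * π := by
    rw [div_lt_iff₀ (by positivity)]
    nlinarith [pi_pos, (Nat.one_le_cast.mpr hs : (1 : ℝ) ≤ s)]
  have hcos : cos (2 * s * (0 + π / (2 * s))) = -1 := by
    rw [zero_add, mul_div_cancel₀ _ (by positivity), cos_pi]
  have key := congrArg (· ((↑) '' Icc 0 (0 + π / (2 * s)))) h
  rw [Qmeas_image_Icc s hs 0 (by positivity) hL, AddCircle.haarAddCircle_image_Icc hL, hcos,
    mul_zero, cos_zero, sub_neg_eq_add, one_add_one_eq_two,
    ENNReal.ofReal_eq_ofReal_iff (by positivity) (by positivity), div_left_inj' two_pi_pos.ne',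
    add_eq_left] at key
  norm_num [hs.ne'] at key

theorem haarAddCircle_arc {a : ℝ} (ha : a < 1) (β : ℝ) :
    AddCircle.haarAddCircle (arc a β) = ENNReal.ofReal a := by
  rw [arc, AddCircle.haarAddCircle_image_Icc ((mul_lt_iff_lt_one_right two_pi_pos).mpr ha),
    mul_div_cancel_left₀ _ two_pi_pos.ne']

theorem Qmeas_arc {r s : ℕ} (hs : 0 < s) {a : ℝ} (ha : a = r / s) (ha1 : a < 1) (β : ℝ) :
    Qmeas s (arc a β) = ENNReal.ofReal a := by
  have hsa : (s : ℝ) * (2 * π * a) = (2 * r : ℕ) * π := by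
    rw [ha]
    field_simp
    push_cast
    ring
  rw [arc, Qmeas_image_Icc s hs β (by rw [ha]; positivity)
      ((mul_lt_iff_lt_one_right two_pi_pos).mpr ha1),
    cos_two_mul_add_eq_of_mul_eq_nat_mul_pi hsa, sub_self, zero_div, add_zero,
    mul_div_cancel_left₀ _ two_pi_pos.ne']

theorem stmt6_general (r s : ℕ) (hs : 0 < s)
    (a : ℝ) (ha : a = (r : ℝ) / s) (ha' : a ∈ Set.Ioo (0 : ℝ) (1 / 2)) :
    IsProbabilityMeasure (Qmeas s) ∧
    Qmeas s ≠ (AddCircle.haarAddCircle : Measure (AddCircle (2 * π))) ∧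
    ∀ β : ℝ,
      Qmeas s (arc a β) = (AddCircle.haarAddCircle : Measure (AddCircle (2 * π))) (arc a β) ∧
      (AddCircle.haarAddCircle : Measure (AddCircle (2 * π))) (arc a β) = ENNReal.ofReal a := by
  have ha1 : a < 1 := by linarith [ha'.2]
  refine ⟨isProbabilityMeasure_Qmeas s hs, Qmeas_ne_haarAddCircle s hs, fun β => ?_⟩
  rw [Qmeas_arc hs ha ha1, haarAddCircle_arc ha1]
  exact ⟨rfl, rfl⟩

theorem stmt6 (r s : ℕ) (hr : 0 < r) (hs : 0 < s) (hcop : Nat.Coprime r s)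
    (a : ℝ) (ha : a = (r : ℝ) / s) (ha' : a ∈ Set.Ioo (0 : ℝ) (1 / 2)) :
    IsProbabilityMeasure (Qmeas s) ∧
    Qmeas s ≠ (AddCircle.haarAddCircle : Measure (AddCircle (2 * π))) ∧
    ∀ β : ℝ,
      Qmeas s (arc a β) = (AddCircle.haarAddCircle : Measure (AddCircle (2 * π))) (arc a β) ∧
      (AddCircle.haarAddCircle : Measure (AddCircle (2 * π))) (arc a β) = ENNReal.ofReal a :=
  stmt6_general r s hs a ha ha'
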